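/- arXiv:2108.03303 — 2 statements merged into one kernel-verified Lean document; each statement's English description precedes it below -/
import Mathlib

section
/- Let L₃ = I × Bool, where I = [0,1] ⊆ ℝ is the unit interval with its complete lattice structure, ordered componentwise. An element (r, b) ∈ L₃ is a non-generator of L₃ (with respect to complete-sublattice generation) if and only if (r, b) ∉ {(0, true), (1, false)}. -/
/-- A complete sublattice of a complete lattice: a subset closed under arbitrary
infima and suprema computed in `L` (including the empty ones, so it contains `⊤` and `⊥`). -/
def IsCompleteSublattice {L : Type*} [CompleteLattice L] (S : Set L) : Prop :=
  (∀ Y : Set L, Y ⊆ S → sInf Y ∈ S) ∧ (∀ Y : Set L, Y ⊆ S → sSup Y ∈ S)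

/-- The complete sublattice generated by `X`: the intersection of all complete
sublattices containing `X`. -/
def latGen {L : Type*} [CompleteLattice L] (X : Set L) : Set L :=
  ⋂₀ {S : Set L | IsCompleteSublattice S ∧ X ⊆ S}

/-- `a` is a non-generator (w.r.t. complete-sublattice generation). -/
def IsLatNonGenerator {L : Type*} [CompleteLattice L] (a : L) : Prop :=
  ∀ X : Set L, latGen (X ∪ {a}) = Set.univ → latGen X = Set.univ

/-- A maximal proper complete sublattice. -/
def IsMaxProperSublattice {L : Type*} [CompleteLattice L] (P : Set L) : Prop :=
  IsCompleteSublattice P ∧ P ≠ Set.univ ∧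
    ∀ Q : Set L, IsCompleteSublattice Q → Q ≠ Set.univ → P ⊆ Q → P = Q

instance : Fact ((0 : ℝ) ≤ 1) := ⟨zero_le_one⟩

section aux
variable {L : Type*} [CompleteLattice L]

lemma latGen_le {X S : Set L} (hS : IsCompleteSublattice S) (hXS : X ⊆ S) :
    latGen X ⊆ S := Set.sInter_subset_of_mem ⟨hS, hXS⟩

lemma le_latGen {X : Set L} : X ⊆ latGen X := fun _x hx S hS => hS.2 hx

lemma latGen_isCS (X : Set L) : IsCompleteSublattice (latGen X) := by
  constructor
  · intro Y hY S hS
    exact hS.1.1 Y (fun y hy => hY hy S hS)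
  · intro Y hY S hS
    exact hS.1.2 Y (fun y hy => hY hy S hS)
end aux


notation "I01" => Set.Icc (0:ℝ) 1

example : (⊥ : I01) = ⟨0, by norm_num⟩ := rfl
example : (⊤ : I01) = ⟨1, by norm_num⟩ := rfl
example : (⊤ : I01 × Bool) = (⟨1, by norm_num⟩, true) := rfl
example : (⊥ : I01 × Bool) = (⟨0, by norm_num⟩, false) := rfl
example (p q : I01 × Bool) : p ⊓ q = (p.1 ⊓ q.1, p.2 ⊓ q.2) := rfl
example (b : Bool) : b ⊓ false = false := by simp
example (x : I01) : x ⊓ ⊤ = x := by simp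

lemma sub1 (c : I01) : IsCompleteSublattice {p : I01 × Bool | p.2 = true → c ≤ p.1} := by
  constructor
  · intro Y hY ht
    rw [Prod.fst_sInf]
    refine le_sInf ?_
    rintro _ ⟨y, hy, rfl⟩
    refine hY hy ?_
    have : (⊤ : Bool) ≤ y.2 := by
      rw [Prod.snd_sInf] at ht
      calc (⊤:Bool) = sInf (Prod.snd '' Y) := ht.symm
        _ ≤ y.2 := sInf_le ⟨y, hy, rfl⟩
    exact top_le_iff.1 this
  · intro Y hY ht
    rw [Prod.snd_sSup] at ht
    have : ∃ y ∈ Y, y.2 = true := by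
      by_contra hc
      push_neg at hc
      have : sSup (Prod.snd '' Y) ≤ ⊥ := by
        refine sSup_le ?_
        rintro _ ⟨y, hy, rfl⟩
        have := hc y hy
        simp only [Bool.not_eq_true] at this
        simp [this]
      rw [ht] at this
      exact absurd this (by simp)
    obtain ⟨y, hy, hy2⟩ := this
    rw [Prod.fst_sSup]
    exact (hY hy hy2).trans (le_sSup ⟨y, hy, rfl⟩)

lemma sub2 (c : I01) : IsCompleteSublattice {p : I01 × Bool | p.2 = false → p.1 ≤ c} := by
  constructor
  · intro Y hY ht
    rw [Prod.snd_sInf] at ht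
    have : ∃ y ∈ Y, y.2 = false := by
      by_contra hc
      push_neg at hc
      have : (⊤ : Bool) ≤ sInf (Prod.snd '' Y) := by
        refine le_sInf ?_
        rintro _ ⟨y, hy, rfl⟩
        have := hc y hy
        simp only [Bool.not_eq_false] at this
        simp [this]
      rw [ht] at this
      exact absurd this (by simp)
    obtain ⟨y, hy, hy2⟩ := this
    rw [Prod.fst_sInf]
    exact (sInf_le (Set.mem_image_of_mem Prod.fst hy)).trans (hY hy hy2)
  · intro Y hY ht
    rw [Prod.fst_sSup]
    refine sSup_le ?_
    rintro _ ⟨y, hy, rfl⟩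
    refine hY hy ?_
    have : y.2 ≤ (⊥ : Bool) := by
      rw [Prod.snd_sSup] at ht
      calc y.2 ≤ sSup (Prod.snd '' Y) := le_sSup ⟨y, hy, rfl⟩
        _ = ⊥ := ht
    exact le_bot_iff.1 this

lemma sub3 (D : Set I01) (hDi : ∀ Y ⊆ D, sInf Y ∈ D) (hDs : ∀ Y ⊆ D, sSup Y ∈ D) :
    IsCompleteSublattice {p : I01 × Bool | p.1 ∈ D} := by
  constructor
  · intro Y hY
    show (sInf Y).1 ∈ D
    rw [Prod.fst_sInf]
    have h : Prod.fst '' Y ⊆ D := by rintro _ ⟨y, hy, rfl⟩; exact hY hy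
    exact hDi _ h
  · intro Y hY
    show (sSup Y).1 ∈ D
    rw [Prod.fst_sSup]
    have h : Prod.fst '' Y ⊆ D := by rintro _ ⟨y, hy, rfl⟩; exact hY hy
    exact hDs _ h

lemma fiber_sInf (Y : Set I01) (hY : Y.Nonempty) (b : Bool) :
    sInf ((fun x => (x, b)) '' Y) = (sInf Y, b) := by
  apply Prod.ext
  · rw [Prod.fst_sInf, Set.image_image]
    simp
  · rw [Prod.snd_sInf, Set.image_image]
    simp [hY.image_const, sInf_singleton]

lemma fiber_sSup (Y : Set I01) (hY : Y.Nonempty) (b : Bool) :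
    sSup ((fun x => (x, b)) '' Y) = (sSup Y, b) := by
  apply Prod.ext
  · rw [Prod.fst_sSup, Set.image_image]
    simp
  · rw [Prod.snd_sSup, Set.image_image]
    simp [hY.image_const, sSup_singleton]

lemma mem_inf_of {L : Type*} [CompleteLattice L] {S : Set L} (hS : IsCompleteSublattice S)
    {p q : L} (hp : p ∈ S) (hq : q ∈ S) : p ⊓ q ∈ S := by
  have := hS.1 {p, q} (by rintro r (rfl | rfl) <;> assumption)
  rwa [sInf_pair] at this

lemma mem_sup_of {L : Type*} [CompleteLattice L] {S : Set L} (hS : IsCompleteSublattice S)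
    {p q : L} (hp : p ∈ S) (hq : q ∈ S) : p ⊔ q ∈ S := by
  have := hS.2 {p, q} (by rintro r (rfl | rfl) <;> assumption)
  rwa [sSup_pair] at this

lemma bot_ne_top_I01 : (⊥ : I01) ≠ ⊤ := by
  intro h
  have : (0:ℝ) = 1 := congrArg Subtype.val h
  norm_num at this

lemma key (S : Set (I01 × Bool)) (hS : IsCompleteSublattice S) (hne : S ≠ Set.univ)
    (a : I01 × Bool) (ha0 : a ≠ ((⊥ : I01), true)) (ha1 : a ≠ ((⊤ : I01), false)) :
    ∃ P, IsCompleteSublattice P ∧ P ≠ Set.univ ∧ S ⊆ P ∧ a ∈ P := by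
  have htop : (⊤ : I01 × Bool) ∈ S := by
    have := hS.1 ∅ (Set.empty_subset _); rwa [sInf_empty] at this
  have hbot : (⊥ : I01 × Bool) ∈ S := by
    have := hS.2 ∅ (Set.empty_subset _); rwa [sSup_empty] at this
  by_cases h0 : ((⊥ : I01), true) ∈ S
  · by_cases h1 : ((⊤ : I01), false) ∈ S
    · -- both corners in S : S = C × Bool
      set C : Set I01 := {x | (x, false) ∈ S} with hCdef
      have hCi : ∀ Y ⊆ C, sInf Y ∈ C := by
        intro Y hY
        rcases Y.eq_empty_or_nonempty with rfl | hne'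
        · rw [sInf_empty]; exact h1
        · have himg : (fun x => (x, false)) '' Y ⊆ S := by rintro _ ⟨x, hx, rfl⟩; exact hY hx
          have := hS.1 _ himg
          rwa [fiber_sInf Y hne'] at this
      have hCs : ∀ Y ⊆ C, sSup Y ∈ C := by
        intro Y hY
        rcases Y.eq_empty_or_nonempty with rfl | hne'
        · rw [sSup_empty]; exact hbot
        · have himg : (fun x => (x, false)) '' Y ⊆ S := by rintro _ ⟨x, hx, rfl⟩; exact hY hx
          have := hS.2 _ himg
          rwa [fiber_sSup Y hne'] at this
      have hCtop : (⊤ : I01) ∈ C := h1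
      have fibS : ∀ p ∈ S, (p.1, false) ∈ S ∧ (p.1, true) ∈ S := by
        intro p hp
        constructor
        · have hm := mem_inf_of hS hp h1
          have e : p ⊓ ((⊤ : I01), false) = (p.1, false) := by
            apply Prod.ext <;> simp
          rwa [e] at hm
        · have hm := mem_sup_of hS hp h0
          have e : p ⊔ ((⊥ : I01), true) = (p.1, true) := by
            apply Prod.ext <;> simp
          rwa [e] at hm
      have hSC : ∀ p ∈ S, p.1 ∈ C := fun p hp => (fibS p hp).1
      set D : Set I01 := insert a.1 C with hDdef
      have hDi : ∀ Y ⊆ D, sInf Y ∈ D := by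
        intro Y hY
        by_cases hYC : Y ⊆ C
        · exact Set.mem_insert_of_mem _ (hCi Y hYC)
        · have haY : a.1 ∈ Y := by
            obtain ⟨y, hy, hyC⟩ := Set.not_subset.1 hYC
            rcases hY hy with h | h
            · exact h ▸ hy
            · exact absurd h hyC
          have hsub : Y \ {a.1} ⊆ C := by
            intro z hz
            rcases hY hz.1 with h | h
            · exact absurd h hz.2
            · exact h
          have hc := hCi _ hsub
          have hre : Y = insert a.1 (Y \ {a.1}) := by
            rw [Set.insert_diff_singleton, Set.insert_eq_self.2 haY]
          rw [hre, sInf_insert]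
          rcases le_total a.1 (sInf (Y \ {a.1})) with h | h
          · rw [inf_eq_left.2 h]; exact Set.mem_insert _ _
          · rw [inf_eq_right.2 h]; exact Set.mem_insert_of_mem _ hc
      have hDs : ∀ Y ⊆ D, sSup Y ∈ D := by
        intro Y hY
        by_cases hYC : Y ⊆ C
        · exact Set.mem_insert_of_mem _ (hCs Y hYC)
        · have haY : a.1 ∈ Y := by
            obtain ⟨y, hy, hyC⟩ := Set.not_subset.1 hYC
            rcases hY hy with h | h
            · exact h ▸ hy
            · exact absurd h hyC
          have hsub : Y \ {a.1} ⊆ C := by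
            intro z hz
            rcases hY hz.1 with h | h
            · exact absurd h hz.2
            · exact h
          have hc := hCs _ hsub
          have hre : Y = insert a.1 (Y \ {a.1}) := by
            rw [Set.insert_diff_singleton, Set.insert_eq_self.2 haY]
          rw [hre, sSup_insert]
          rcases le_total a.1 (sSup (Y \ {a.1})) with h | h
          · rw [sup_eq_right.2 h]; exact Set.mem_insert_of_mem _ hc
          · rw [sup_eq_left.2 h]; exact Set.mem_insert _ _
      refine ⟨{p | p.1 ∈ D}, sub3 D hDi hDs, ?_,
        fun p hp => Set.mem_insert_of_mem _ (hSC p hp), Set.mem_insert _ _⟩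
      intro hPu
      have hall : ∀ x : I01, x ∈ D := by
        intro x
        have : (x, false) ∈ {p : I01 × Bool | p.1 ∈ D} := hPu ▸ Set.mem_univ _
        exact this
      obtain ⟨s, hs⟩ := (Set.ne_univ_iff_exists_notMem S).1 hne
      have hs1 : s.1 ∉ C := by
        intro hsC
        apply hs
        have hfib := fibS (s.1, false) hsC
        have : (s.1, s.2) ∈ S := by
          cases hsb : s.2
          · exact hfib.1
          · exact hfib.2
        rwa [Prod.mk.eta] at this
      have hra : s.1 = a.1 := by
        rcases hall s.1 with h | h
        · exact h
        · exact absurd h hs1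
      have haC : a.1 ∉ C := hra ▸ hs1
      have halt : a.1 < ⊤ := lt_top_iff_ne_top.2 (fun h => haC (h ▸ hCtop))
      have hYC : {x : I01 | a.1 < x} ⊆ C := by
        intro x hx
        rcases hall x with h | h
        · exact absurd h.symm (ne_of_lt hx)
        · exact h
      have hmem := hCi _ hYC
      have heq : sInf {x : I01 | a.1 < x} = a.1 := by
        apply le_antisymm
        · by_contra hlt
          push_neg at hlt
          obtain ⟨z, hz1, hz2⟩ := exists_between hlt
          exact absurd (sInf_le (show z ∈ {x : I01 | a.1 < x} from hz1)) (not_le.2 hz2)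
        · exact le_sInf fun x hx => le_of_lt hx
      rw [heq] at hmem
      exact haC hmem
    · -- (⊤, false) ∉ S
      set F : Set I01 := {x | (x, false) ∈ S} with hFdef
      have hFne : F.Nonempty := ⟨⊥, hbot⟩
      have hFs : sSup F ∈ F := by
        have himg : (fun x => (x, false)) '' F ⊆ S := by rintro _ ⟨x, hx, rfl⟩; exact hx
        have := hS.2 _ himg
        rwa [fiber_sSup F hFne] at this
      have hftop : sSup F ≠ ⊤ := fun h => h1 (h ▸ hFs)
      set r' : I01 := if a.2 then ⊥ else a.1 with hr'
      have hr'top : r' ≠ ⊤ := by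
        cases ha2 : a.2
        · rw [hr', ha2]
          simp only [Bool.false_eq_true, if_false]
          intro h
          exact ha1 (Prod.ext h ha2)
        · rw [hr', ha2]
          simp only [if_true]
          exact fun h => bot_ne_top_I01 h
      set c : I01 := sSup F ⊔ r' with hcdef
      have hctop : c ≠ ⊤ := by
        rcases le_total (sSup F) r' with h | h
        · rw [hcdef, sup_eq_right.2 h]; exact hr'top
        · rw [hcdef, sup_eq_left.2 h]; exact hftop
      refine ⟨{p | p.2 = false → p.1 ≤ c}, sub2 c, ?_, ?_, ?_⟩
      · intro hPu
        have : ((⊤ : I01), false) ∈ {p : I01 × Bool | p.2 = false → p.1 ≤ c} :=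
          hPu ▸ Set.mem_univ _
        exact hctop (top_le_iff.1 (this rfl))
      · intro p hp hp2
        have hpF : p.1 ∈ F := by
          show (p.1, false) ∈ S
          rw [← hp2, Prod.mk.eta]; exact hp
        exact (le_sSup hpF).trans le_sup_left
      · intro ha2
        have : r' = a.1 := by rw [hr', ha2]; simp
        exact this ▸ le_sup_right
  · -- (⊥, true) ∉ S
    set T : Set I01 := {x | (x, true) ∈ S} with hTdef
    have hTne : T.Nonempty := ⟨⊤, htop⟩
    have hTi : sInf T ∈ T := by
      have himg : (fun x => (x, true)) '' T ⊆ S := by rintro _ ⟨x, hx, rfl⟩; exact hx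
      have := hS.1 _ himg
      rwa [fiber_sInf T hTne] at this
    have htbot : sInf T ≠ ⊥ := fun h => h0 (h ▸ hTi)
    set r' : I01 := if a.2 then a.1 else ⊤ with hr'
    have hr'bot : r' ≠ ⊥ := by
      cases ha2 : a.2
      · rw [hr', ha2]
        simp only [Bool.false_eq_true, if_false]
        exact fun h => bot_ne_top_I01 h.symm
      · rw [hr', ha2]
        simp only [if_true]
        intro h
        exact ha0 (Prod.ext h ha2)
    set c : I01 := sInf T ⊓ r' with hcdef
    have hcbot : c ≠ ⊥ := by
      rcases le_total (sInf T) r' with h | h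
      · rw [hcdef, inf_eq_left.2 h]; exact htbot
      · rw [hcdef, inf_eq_right.2 h]; exact hr'bot
    refine ⟨{p | p.2 = true → c ≤ p.1}, sub1 c, ?_, ?_, ?_⟩
    · intro hPu
      have : ((⊥ : I01), true) ∈ {p : I01 × Bool | p.2 = true → c ≤ p.1} :=
        hPu ▸ Set.mem_univ _
      exact hcbot (le_bot_iff.1 (this rfl))
    · intro p hp hp2
      have hpT : p.1 ∈ T := by
        show (p.1, true) ∈ S
        rw [← hp2, Prod.mk.eta]; exact hp
      exact inf_le_left.trans (sInf_le hpT)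
    · intro ha2
      have : r' = a.1 := by rw [hr', ha2]; simp
      exact this ▸ inf_le_right

lemma nongen (a : I01 × Bool) (ha0 : a ≠ ((⊥ : I01), true)) (ha1 : a ≠ ((⊤ : I01), false)) :
    IsLatNonGenerator a := by
  intro X hX
  by_contra hne
  obtain ⟨P, hPcs, hPne, hSP, haP⟩ := key (latGen X) (latGen_isCS X) hne a ha0 ha1
  apply hPne
  apply Set.eq_univ_of_univ_subset
  rw [← hX]
  exact latGen_le hPcs
    (Set.union_subset (le_latGen.trans hSP) (Set.singleton_subset_iff.2 haP))

lemma gen0 : ¬ IsLatNonGenerator (((⊥ : I01), true) : I01 × Bool) := by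
  intro h
  set X : Set (I01 × Bool) := {p | p.2 = true → (⊤ : I01) ≤ p.1} with hXdef
  have hgen : latGen (X ∪ {((⊥ : I01), true)}) = Set.univ := by
    apply Set.eq_univ_of_forall
    intro p
    simp only [latGen, Set.mem_sInter, Set.mem_setOf_eq]
    rintro Q ⟨hQcs, hQsub⟩
    cases hp2 : p.2
    · have hpX : p ∈ X := fun hh => absurd (hp2 ▸ hh) (by simp)
      exact hQsub (Set.mem_union_left _ hpX)
    · have h1 : ((p.1, false) : I01 × Bool) ∈ Q :=
        hQsub (Set.mem_union_left _ (fun hh => by simp at hh))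
      have h2 : (((⊥ : I01), true) : I01 × Bool) ∈ Q := hQsub (Set.mem_union_right _ rfl)
      have hm := mem_sup_of hQcs h1 h2
      have e : ((p.1, false) : I01 × Bool) ⊔ ((⊥ : I01), true) = (p.1, true) := by
        apply Prod.ext <;> simp
      rw [e] at hm
      rwa [← hp2, Prod.mk.eta] at hm
  have hu := h X hgen
  have hsub : latGen X ⊆ X := latGen_le (sub1 ⊤) subset_rfl
  rw [hu] at hsub
  have hbm : (((⊥ : I01), true) : I01 × Bool) ∈ X := hsub (Set.mem_univ _)
  exact bot_ne_top_I01 (le_bot_iff.1 (hbm rfl)).symm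

lemma gen1 : ¬ IsLatNonGenerator (((⊤ : I01), false) : I01 × Bool) := by
  intro h
  set X : Set (I01 × Bool) := {p | p.2 = false → p.1 ≤ (⊥ : I01)} with hXdef
  have hgen : latGen (X ∪ {((⊤ : I01), false)}) = Set.univ := by
    apply Set.eq_univ_of_forall
    intro p
    simp only [latGen, Set.mem_sInter, Set.mem_setOf_eq]
    rintro Q ⟨hQcs, hQsub⟩
    cases hp2 : p.2
    · have h1 : ((p.1, true) : I01 × Bool) ∈ Q :=
        hQsub (Set.mem_union_left _ (fun hh => by simp at hh))
      have h2 : (((⊤ : I01), false) : I01 × Bool) ∈ Q := hQsub (Set.mem_union_right _ rfl)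
      have hm := mem_inf_of hQcs h1 h2
      have e : ((p.1, true) : I01 × Bool) ⊓ ((⊤ : I01), false) = (p.1, false) := by
        apply Prod.ext <;> simp
      rw [e] at hm
      rwa [← hp2, Prod.mk.eta] at hm
    · have hpX : p ∈ X := fun hh => absurd (hp2 ▸ hh) (by simp)
      exact hQsub (Set.mem_union_left _ hpX)
  have hu := h X hgen
  have hsub : latGen X ⊆ X := latGen_le (sub2 ⊥) subset_rfl
  rw [hu] at hsub
  have hbm : (((⊤ : I01), false) : I01 × Bool) ∈ X := hsub (Set.mem_univ _)
  exact bot_ne_top_I01 (top_le_iff.1 (hbm rfl))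


/-- In `L₃ = [0,1] × Bool`, an element is a non-generator iff it is neither `(0, true)`
nor `(1, false)`. -/
theorem nonGenerators_L3_description :
    ∀ p : Set.Icc (0 : ℝ) 1 × Bool,
      IsLatNonGenerator p ↔
        p ∉ ({((⟨0, by norm_num⟩ : Set.Icc (0 : ℝ) 1), true),
              ((⟨1, by norm_num⟩ : Set.Icc (0 : ℝ) 1), false)} :
             Set (Set.Icc (0 : ℝ) 1 × Bool)) := by
  intro p
  constructor
  · intro hng hmem
    simp only [Set.mem_insert_iff, Set.mem_singleton_iff] at hmem
    rcases hmem with rfl | rfl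
    · exact gen0 hng
    · exact gen1 hng
  · intro hmem
    apply nongen
    · intro h
      exact hmem (Set.mem_insert_iff.2 (Or.inl h))
    · intro h
      exact hmem (Set.mem_insert_iff.2 (Or.inr h))
end

section
/- Let L be any complete lattice and let Γ be the set of non-generators of L with respect to complete-sublattice generation. Then Γ is a sublattice of L: if a, b ∈ Γ then a ⊓ b ∈ Γ and a ⊔ b ∈ Γ. -/
lemma subset_latGen {L : Type*} [CompleteLattice L] (X : Set L) : X ⊆ latGen X := by
  intro x hx S hS
  exact hS.2 hx

lemma latGen_subset {L : Type*} [CompleteLattice L] {X S : Set L}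
    (hS : IsCompleteSublattice S) (hXS : X ⊆ S) : latGen X ⊆ S :=
  Set.sInter_subset_of_mem ⟨hS, hXS⟩

lemma latGen_isCompleteSublattice {L : Type*} [CompleteLattice L] (X : Set L) :
    IsCompleteSublattice (latGen X) := by
  constructor
  · intro Y hY S hS
    exact hS.1.1 Y (fun y hy => hY hy S hS)
  · intro Y hY S hS
    exact hS.1.2 Y (fun y hy => hY hy S hS)

/-- If `c ∈ latGen {a, b}`-style (here: c is obtained as inf or sup of a,b),
then generating with `c` is weaker than generating with `a` and `b`. -/
lemma latGen_pair_univ {L : Type*} [CompleteLattice L] {a b c : L}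
    (hc : c ∈ latGen ({a, b} : Set L)) (X : Set L)
    (h : latGen (X ∪ {c}) = Set.univ) : latGen ((X ∪ {b}) ∪ {a}) = Set.univ := by
  have hsub : latGen (X ∪ {c}) ⊆ latGen ((X ∪ {b}) ∪ {a}) := by
    apply latGen_subset (latGen_isCompleteSublattice _)
    apply Set.union_subset
    · exact (Set.subset_union_left.trans Set.subset_union_left).trans (subset_latGen _)
    · intro x hx
      rcases hx with rfl
      have hpair : ({a, b} : Set L) ⊆ latGen ((X ∪ {b}) ∪ {a}) := by
        intro y hy
        rcases hy with rfl | rfl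
        · exact subset_latGen _ (Set.mem_union_right _ rfl)
        · exact subset_latGen _ (Set.mem_union_left _ (Set.mem_union_right _ rfl))
      exact latGen_subset (latGen_isCompleteSublattice _) hpair hc
  exact Set.eq_univ_of_univ_subset (h ▸ hsub)

/-- In any complete lattice, the set of non-generators (w.r.t. complete-sublattice
generation) is closed under finite meets and joins. -/
theorem nonGenerators_sublattice {L : Type*} [CompleteLattice L] (a b : L)
    (ha : IsLatNonGenerator a) (hb : IsLatNonGenerator b) :
    IsLatNonGenerator (a ⊓ b) ∧ IsLatNonGenerator (a ⊔ b) := by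
  have hinf : (a ⊓ b) ∈ latGen ({a, b} : Set L) := by
    have := (latGen_isCompleteSublattice ({a, b} : Set L)).1 {a, b} (subset_latGen _)
    simpa [sInf_pair] using this
  have hsup : (a ⊔ b) ∈ latGen ({a, b} : Set L) := by
    have := (latGen_isCompleteSublattice ({a, b} : Set L)).2 {a, b} (subset_latGen _)
    simpa [sSup_pair] using this
  constructor
  · intro X h
    exact hb X (ha (X ∪ {b}) (latGen_pair_univ hinf X h))
  · intro X h
    exact hb X (ha (X ∪ {b}) (latGen_pair_univ hsup X h))
end
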